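/- Suppose there exists a constant C such that φ_T(n², 2n, n) ≤ C for all natural numbers n ≥ 1, where φ_T(M₁,M₂,n) := -∑_{d squarefree, d>1, prime factors ≤ n} μ(d)·⌊((M₁ mod d)+(M₂ mod d))/d⌋. Then π((n+1)²) - π(n²) → ∞ as n → ∞. -/

import Mathlib

open ArithmeticFunction Nat Finset

/-- Index set: squarefree `d > 1` all of whose prime factors are `≤ n`. -/
def sqfSet (n : ℕ) : Finset ℕ :=
  (Finset.range (primorial n + 1)).filter
    (fun d => 1 < d ∧ Squarefree d ∧ ∀ p ∈ d.primeFactors, p ≤ n)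

/-- The transformed Legendre function `φ_T`. -/
def phiT (M₁ M₂ n : ℕ) : ℤ :=
  -∑ d ∈ sqfSet n, ArithmeticFunction.moebius d * (((M₁ % d + M₂ % d) / d : ℕ) : ℤ)

/-!
Legendre's sieve with the primes `≤ n` counts `1` together with the primes in `(n, M]` for every
`M < (n + 1) ^ 2`. Applying it at `M = n ^ 2`, `2 * n` and `n ^ 2 + 2 * n`, and splitting
`⌊(n ^ 2 + 2 * n) / d⌋ = ⌊n ^ 2 / d⌋ + ⌊2 * n / d⌋ + ⌊(n ^ 2 % d + 2 * n % d) / d⌋`, gives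
`π ((n + 1) ^ 2) - π (n ^ 2) = π (2 * n) - π n + 1 - φ_T (n ^ 2, 2 * n, n)`.
A bounded `φ_T` therefore transfers the growth of `π (2 * n) - π n` to the gaps between squares.
That growth comes from Erdős' proof of Bertrand's postulate: `4 ^ n < n * centralBinom n`, while
the primes `≤ n` contribute at most `(2 * n) ^ √(2 * n) * 4 ^ (2 * n / 3)` to `centralBinom n`
and each prime in `(n, 2 * n]` at most `2 * n`.
-/

open Filter Asymptotics
open scoped ArithmeticFunction.Moebius ArithmeticFunction.zeta Nat.Prime

lemma dvd_primorial_iff {d n : ℕ} :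
    d ∣ primorial n ↔ Squarefree d ∧ ∀ p ∈ d.primeFactors, p ≤ n := by
  constructor
  · intro h
    refine ⟨(squarefree_primorial n).squarefree_of_dvd h, fun p hp => ?_⟩
    have hp' := primeFactors_mono h (primorial_ne_zero n) hp
    rw [primeFactors_primorial] at hp'
    exact le_of_mem_primesLE hp'
  · rintro ⟨hsq, hle⟩
    rw [← prod_primeFactors_of_squarefree hsq, prod_primeFactors_dvd_iff (primorial_ne_zero n),
      primeFactors_primorial]
    exact fun p hp => mem_primesLE.2 ⟨hle p hp, prime_of_mem_primeFactors hp⟩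

lemma sqfSet_eq_divisors_primorial_erase_one (n : ℕ) :
    sqfSet n = (primorial n).divisors.erase 1 := by
  ext d
  simp only [sqfSet, mem_filter, mem_range, mem_erase, mem_divisors, Nat.lt_succ_iff]
  constructor
  · rintro ⟨-, hd1, hd⟩
    exact ⟨hd1.ne', dvd_primorial_iff.2 hd, primorial_ne_zero n⟩
  · rintro ⟨hd1, hdvd, -⟩
    have hd0 : d ≠ 0 := by rintro rfl; exact primorial_ne_zero n (zero_dvd_iff.1 hdvd)
    exact ⟨le_of_dvd (primorial_pos n) hdvd, by omega, dvd_primorial_iff.1 hdvd⟩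

lemma sum_divisors_moebius (n : ℕ) : ∑ d ∈ n.divisors, μ d = if n = 1 then 1 else 0 := by
  rw [← coe_mul_zeta_apply, moebius_mul_coe_zeta, one_apply]

/-- Legendre's identity: Möbius inversion of `⌊M / d⌋ = #{m ≤ M | d ∣ m}`. -/
theorem sum_divisors_moebius_mul_div {N : ℕ} (hN : N ≠ 0) (M : ℕ) :
    ∑ d ∈ N.divisors, μ d * ((M / d : ℕ) : ℤ) = #{m ∈ Ioc 0 M | N.Coprime m} := by
  calc ∑ d ∈ N.divisors, μ d * ((M / d : ℕ) : ℤ)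
      = ∑ d ∈ N.divisors, ∑ m ∈ Ioc 0 M, if d ∣ m then μ d else 0 := by
        refine sum_congr rfl fun d _ => ?_
        rw [← Ioc_filter_dvd_card_eq_div, card_filter, Nat.cast_sum, mul_sum]
        exact sum_congr rfl fun m _ => by split_ifs <;> simp
    _ = ∑ m ∈ Ioc 0 M, ∑ d ∈ (N.gcd m).divisors, μ d := by
        rw [sum_comm]
        refine sum_congr rfl fun m _ => ?_
        rw [← sum_filter, ← divisors_filter_dvd_of_dvd hN (Nat.gcd_dvd_left N m)]
        refine sum_congr (filter_congr fun d hd => ?_) fun _ _ => rfl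
        rw [Nat.dvd_gcd_iff, and_iff_right (dvd_of_mem_divisors hd)]
    _ = #{m ∈ Ioc 0 M | N.Coprime m} := by
        simp_rw [sum_divisors_moebius, card_filter, Nat.cast_sum, Nat.cast_ite, Nat.cast_one,
          Nat.cast_zero]

lemma primeCounting_add_one_of_not_prime {k : ℕ} (hk : ¬(k + 1).Prime) :
    π (k + 1) = π k := by
  simp [primeCounting, primeCounting', count_succ, hk]

lemma card_filter_prime_Ioc_add_primeCounting {n M : ℕ} (h : n ≤ M) :
    #{p ∈ Ioc n M | p.Prime} + π n = π M := by
  rw [← primesLE_card_eq_primeCounting, ← primesLE_card_eq_primeCounting,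
    primesLE_eq_filter_Ioc_zero, primesLE_eq_filter_Ioc_zero,
    ← Ioc_union_Ioc_eq_Ioc (zero_le n) h,
    filter_union, card_union_of_disjoint (disjoint_filter_filter (Ioc_disjoint_Ioc_of_le le_rfl)),
    add_comm]

lemma filter_coprime_primorial_eq {n M : ℕ} (hM0 : 0 < M) (hM : M < (n + 1) ^ 2) :
    {m ∈ Ioc 0 M | (primorial n).Coprime m} = insert 1 {p ∈ Ioc n M | p.Prime} := by
  ext m
  simp only [mem_filter, mem_Ioc, mem_insert]
  constructor
  · rintro ⟨⟨hm0, hmM⟩, hcop⟩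
    rcases eq_or_ne m 1 with rfl | hm1
    · exact .inl rfl
    have hmin : n < m.minFac := by
      by_contra! hle
      have := (minFac_prime hm1).one_lt
      have := eq_one_of_dvd_coprimes hcop ((minFac_prime hm1).dvd_primorial_iff.2 hle)
        (minFac_dvd m)
      omega
    have hprime : m.Prime := by
      by_contra hnp
      have := minFac_sq_le_self hm0 hnp
      have : (n + 1) ^ 2 ≤ m.minFac ^ 2 := Nat.pow_le_pow_left hmin 2
      omega
    exact .inr ⟨⟨hmin.trans_le (minFac_le hm0), hmM⟩, hprime⟩
  · rintro (rfl | ⟨⟨hnm, hmM⟩, hp⟩)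
    · exact ⟨⟨one_pos, hM0⟩, coprime_one_right _⟩
    · refine ⟨⟨hp.pos, hmM⟩, Nat.coprime_comm.1 ?_⟩
      rw [hp.coprime_iff_not_dvd, hp.dvd_primorial_iff]
      omega

lemma add_sum_sqfSet_moebius_mul_div {n M : ℕ} (hn : 0 < n) (hnM : n ≤ M)
    (hM : M < (n + 1) ^ 2) :
    (M : ℤ) + ∑ d ∈ sqfSet n, μ d * ((M / d : ℕ) : ℤ) = 1 + π M - π n := by
  have h1 : 1 ∈ (primorial n).divisors := one_mem_divisors.2 (primorial_ne_zero n)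
  calc (M : ℤ) + ∑ d ∈ sqfSet n, μ d * ((M / d : ℕ) : ℤ)
      = ∑ d ∈ (primorial n).divisors, μ d * ((M / d : ℕ) : ℤ) := by
        rw [sqfSet_eq_divisors_primorial_erase_one, ← add_sum_erase _ _ h1]
        simp
    _ = #{m ∈ Ioc 0 M | (primorial n).Coprime m} :=
        sum_divisors_moebius_mul_div (primorial_ne_zero n) M
    _ = 1 + π M - π n := by
        rw [filter_coprime_primorial_eq (by omega) hM,
          card_insert_of_notMem (by simp [not_prime_one]),
          ← card_filter_prime_Ioc_add_primeCounting hnM]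
        push_cast
        ring

lemma add_div_eq_div_add_div_add (a b d : ℕ) :
    (a + b) / d = a / d + b / d + (a % d + b % d) / d := by
  rcases d.eq_zero_or_pos with rfl | hd
  · simp
  conv_lhs => rw [← div_add_mod a d, ← div_add_mod b d]
  rw [show d * (a / d) + a % d + (d * (b / d) + b % d) = d * (a / d + b / d) + (a % d + b % d) by
    ring, Nat.mul_add_div hd]

theorem primeCounting_succ_sq_sub_primeCounting_sq {n : ℕ} (hn : 0 < n) :
    (π ((n + 1) ^ 2) : ℤ) - π (n ^ 2) = π (2 * n) - π n + 1 - phiT (n ^ 2) (2 * n) n := by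
  have e₁ := add_sum_sqfSet_moebius_mul_div hn (Nat.le_self_pow two_ne_zero n) (by nlinarith)
  have e₂ := add_sum_sqfSet_moebius_mul_div hn (by omega) (by nlinarith : 2 * n < (n + 1) ^ 2)
  have e₃ := add_sum_sqfSet_moebius_mul_div hn (by nlinarith)
    (by nlinarith : n ^ 2 + 2 * n < (n + 1) ^ 2)
  have hsplit : ∑ d ∈ sqfSet n, μ d * (((n ^ 2 + 2 * n) / d : ℕ) : ℤ) =
      ∑ d ∈ sqfSet n, μ d * ((n ^ 2 / d : ℕ) : ℤ) + ∑ d ∈ sqfSet n, μ d * ((2 * n / d : ℕ) : ℤ) -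
        phiT (n ^ 2) (2 * n) n := by
    rw [phiT, sub_neg_eq_add, ← sum_add_distrib, ← sum_add_distrib]
    refine sum_congr rfl fun d _ => ?_
    rw [add_div_eq_div_add_div_add]
    push_cast
    ring
  have hnot : ¬(n ^ 2 + 2 * n + 1).Prime := by
    rw [show n ^ 2 + 2 * n + 1 = (n + 1) ^ 2 by ring]
    exact Prime.not_prime_pow le_rfl
  rw [show (n + 1) ^ 2 = n ^ 2 + 2 * n + 1 by ring, primeCounting_add_one_of_not_prime hnot]
  rw [Nat.cast_add] at e₃
  linarith

lemma prod_pow_factorization_centralBinom_range_le (n : ℕ) :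
    ∏ p ∈ range (2 * n / 3 + 1), p ^ (centralBinom n).factorization p ≤
      (2 * n) ^ Nat.sqrt (2 * n) * 4 ^ (2 * n / 3) := by
  rcases Nat.eq_zero_or_pos n with rfl | hn
  · simp
  set f : ℕ → ℕ := fun p => p ^ (centralBinom n).factorization p
  set S := {p ∈ range (2 * n / 3 + 1) | p.Prime}
  have hS : ∏ p ∈ S, f p = ∏ p ∈ range (2 * n / 3 + 1), f p :=
    prod_filter_of_ne fun p _ h => by
      contrapose h
      simp [f, factorization_eq_zero_of_not_prime _ h]
  have hmem {p} (hp : p ∈ S) : p.Prime ∧ p ≤ 2 * n / 3 := by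
    rw [mem_filter, mem_range_succ_iff] at hp
    exact hp.symm
  rw [← hS, ← prod_filter_mul_prod_filter_not S (· ≤ Nat.sqrt (2 * n))]
  gcongr
  · calc ∏ p ∈ S with p ≤ Nat.sqrt (2 * n), f p
        ≤ (2 * n) ^ #{p ∈ S | p ≤ Nat.sqrt (2 * n)} :=
          prod_le_pow_card _ _ _ fun p _ => pow_factorization_choose_le (by omega)
      _ ≤ (2 * n) ^ #(Ioc 0 (Nat.sqrt (2 * n))) := by
          refine pow_le_pow_right₀ (by omega) (card_le_card fun p hp => ?_)
          rw [mem_filter] at hp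
          exact mem_Ioc.2 ⟨(hmem hp.1).1.pos, hp.2⟩
      _ = (2 * n) ^ Nat.sqrt (2 * n) := by rw [Nat.card_Ioc, Nat.sub_zero]
  · calc ∏ p ∈ S with ¬p ≤ Nat.sqrt (2 * n), f p
        ≤ ∏ p ∈ S with ¬p ≤ Nat.sqrt (2 * n), p := by
          refine prod_le_prod' fun p hp => ?_
          rw [mem_filter, not_le] at hp
          calc f p ≤ p ^ 1 := pow_right_mono₀ (hmem hp.1).1.one_lt.le
                (factorization_choose_le_one (sqrt_lt'.1 hp.2))
            _ = p := pow_one p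
      _ ≤ primorial (2 * n / 3) :=
          prod_le_prod_of_subset_of_one_le'
            (fun p hp => mem_primesLE.2 (hmem (mem_filter.1 hp).1).symm)
            fun p hp _ => (prime_of_mem_primesLE hp).one_lt.le
      _ ≤ 4 ^ (2 * n / 3) := primorial_le_four_pow _

/-- Erdős: the primes in `(2 * n / 3, n]` do not divide `centralBinom n`. -/
theorem centralBinom_le_mul_pow_card_primes_Ioc {n : ℕ} (hn : 2 < n) :
    centralBinom n ≤ (2 * n) ^ Nat.sqrt (2 * n) * 4 ^ (2 * n / 3) *
      (2 * n) ^ #{p ∈ Ioc n (2 * n) | p.Prime} := by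
  set f : ℕ → ℕ := fun p => p ^ (centralBinom n).factorization p
  have hlarge : ∏ p ∈ Ico (2 * n / 3 + 1) (2 * n + 1), f p =
      ∏ p ∈ Ioc n (2 * n) with p.Prime, f p := by
    refine (prod_subset (fun p hp => ?_) fun p hp hp' => ?_).symm
    · rw [mem_filter, mem_Ioc] at hp
      exact mem_Ico.2 ⟨by omega, by omega⟩
    · rw [mem_Ico] at hp
      rw [mem_filter, mem_Ioc] at hp'
      by_cases hpp : p.Prime
      · have hpn : p ≤ n := by grind
        simp [f, factorization_centralBinom_of_two_mul_self_lt_three_mul hn hpn (by omega)]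
      · simp [f, factorization_eq_zero_of_not_prime _ hpp]
  rw [← prod_pow_factorization_centralBinom,
    ← prod_range_mul_prod_Ico _ (by omega : 2 * n / 3 + 1 ≤ 2 * n + 1), hlarge]
  gcongr
  · exact prod_pow_factorization_centralBinom_range_le n
  · exact prod_le_pow_card _ _ _ fun p _ => pow_factorization_choose_le (by omega)

lemma isLittleO_const_add_sqrt_mul_log (K : ℝ) :
    (fun x => (K + √x) * Real.log x) =o[atTop] id := by
  have hsqrt : (fun x => √x * Real.log x) =o[atTop] id := by
    have h := (isBigO_refl Real.sqrt atTop).mul_isLittleO (isLittleO_log_rpow_atTop one_half_pos)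
    refine h.congr' EventuallyEq.rfl ?_
    filter_upwards [eventually_ge_atTop 0] with x hx
    rw [← Real.sqrt_eq_rpow, Real.mul_self_sqrt hx, id]
  simpa only [add_mul] using (Real.isLittleO_log_id_atTop.const_mul_left K).add hsqrt

lemma log_four_div_three_mul_lt {n : ℕ} (hn : 4 ≤ n) :
    Real.log 4 / 3 * n <
      (1 + √(2 * n) + #{p ∈ Ioc n (2 * n) | p.Prime}) * Real.log (2 * n) := by
  set k := #{p ∈ Ioc n (2 * n) | p.Prime}
  set s := Nat.sqrt (2 * n)
  have h := (four_pow_lt_mul_centralBinom n hn).trans_le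
    (Nat.mul_le_mul_left n (centralBinom_le_mul_pow_card_primes_Ioc (by omega)))
  have hR : (4 : ℝ) ^ n < n * ((2 * n) ^ s * 4 ^ (2 * n / 3) * (2 * n) ^ k) := by
    exact_mod_cast h
  have hn0 : (0 : ℝ) < n := by positivity
  replace hR := Real.log_lt_log (by positivity) hR
  rw [Real.log_mul (by positivity) (by positivity), Real.log_mul (by positivity) (by positivity),
    Real.log_mul (by positivity) (by positivity), Real.log_pow, Real.log_pow, Real.log_pow,
    Real.log_pow] at hR
  have hlog : Real.log n ≤ Real.log (2 * n) := Real.log_le_log hn0 (by linarith)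
  have hlog2n : 0 ≤ Real.log (2 * n) := Real.log_nonneg (by norm_cast; omega)
  have hs : (s : ℝ) * Real.log (2 * n) ≤ √(2 * n) * Real.log (2 * n) := by
    gcongr
    exact_mod_cast Real.nat_sqrt_le_real_sqrt
  have hthird : ((2 * n / 3 : ℕ) : ℝ) * Real.log 4 ≤ 2 * n / 3 * Real.log 4 := by
    gcongr
    exact Nat.cast_div_le.trans (by push_cast; rfl)
  linarith

theorem tendsto_card_primes_Ioc_two_mul :
    Tendsto (fun n => #{p ∈ Ioc n (2 * n) | p.Prime}) atTop atTop := by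
  refine tendsto_atTop.2 fun K => ?_
  have h2n : Tendsto (fun n : ℕ => 2 * (n : ℝ)) atTop atTop :=
    tendsto_natCast_atTop_atTop.const_mul_atTop two_pos
  have hsmall := h2n.eventually
    ((isLittleO_const_add_sqrt_mul_log (1 + K)).bound (c := Real.log 4 / 6) (by positivity))
  filter_upwards [hsmall, eventually_ge_atTop 4] with n hsmall hn
  by_contra! hk
  have hlower := log_four_div_three_mul_lt hn
  have hlog2n : 0 ≤ Real.log (2 * n) := Real.log_nonneg (by norm_cast; omega)
  have hk' : (#{p ∈ Ioc n (2 * n) | p.Prime} : ℝ) ≤ K := by exact_mod_cast hk.le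
  rw [Real.norm_eq_abs, Real.norm_eq_abs, id, abs_of_nonneg (by positivity),
    abs_of_nonneg (by positivity)] at hsmall
  nlinarith

theorem stmt_15
    (h : ∃ C : ℤ, ∀ n : ℕ, 1 ≤ n → phiT (n ^ 2) (2 * n) n ≤ C) :
    Filter.Tendsto (fun n : ℕ => Nat.primeCounting ((n + 1) ^ 2) - Nat.primeCounting (n ^ 2))
      Filter.atTop Filter.atTop := by
  obtain ⟨C, hC⟩ := h
  rw [← tendsto_natCast_atTop_iff (R := ℤ)]
  refine tendsto_atTop_mono' atTop ?_ (tendsto_atTop_add_const_right atTop (1 - C)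
    (tendsto_natCast_atTop_iff.2 tendsto_card_primes_Ioc_two_mul))
  filter_upwards [eventually_ge_atTop 1] with n hn
  have hcount := card_filter_prime_Ioc_add_primeCounting (by omega : n ≤ 2 * n)
  have hmono : π (n ^ 2) ≤ π ((n + 1) ^ 2) := monotone_primeCounting (by gcongr; omega)
  rw [Nat.cast_sub hmono, primeCounting_succ_sq_sub_primeCounting_sq hn, ← hcount]
  push_cast
  linarith [hC n hn]
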